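/- arXiv:2009.05555 — 2 statements merged into one kernel-verified Lean document; each statement's English description precedes it below -/
import Mathlib

section
/- Let V be a 4-dimensional real inner product space and let P, Q be two 2-dimensional subspaces with V = P ⊕ Q (transverse intersection, P ∩ Q = {0}). Suppose J is an orthogonal complex structure on V such that both P and Q are J-invariant and Q = P⊥. If g' is a new inner product on V agreeing with g on P and on Q but with g'(e₁, e₃) ≠ 0 while g'(e₂, e₄) = 0, g'(e₁,e₄) = g'(e₂,e₃) = 0, where (e₁,e₂) is a g-orthonormal basis of P with Je₁ = e₂ and (e₃,e₄) is a g-orthonormal basis of Q with Je₃ = e₄, then P and Q are not simultaneously complex for any orthogonal complex structure with respect to g'. -/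
/-!
A complex structure `J'` that is orthogonal for the symmetric form `g'` is `g'`-skew:
`g'(v, J'v) = 0`. If `J'` preserves `P` and `Q`, on which `g'` is the old inner product,
this forces `J'e₁ ∈ ℝe₂` and `J'e₃ ∈ ℝe₄`, so `g'(e₁, e₃) = g'(J'e₁, J'e₃)` is a multiple
of `g'(e₂, e₄) = 0`.
-/

open RealInnerProductSpace

theorem LinearMap.apply_self_apply_eq_zero_of_isometry_of_sq_eq_neg
    {R M : Type*} [CommRing R] [NoZeroDivisors R] [CharZero R] [AddCommGroup M] [Module R M]
    {B : M →ₗ[R] M →ₗ[R] R} (hB : ∀ v w, B v w = B w v)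
    {J : M →ₗ[R] M} (hJ2 : ∀ v, J (J v) = -v) (hJB : ∀ v w, B (J v) (J w) = B v w) (v : M) :
    B v (J v) = 0 := by
  have h := hJB v (J v)
  rw [hJ2, map_neg, hB] at h
  exact CharZero.neg_eq_self_iff.mp h

section Plane

variable {V : Type*} [NormedAddCommGroup V] [InnerProductSpace ℝ V]

theorem Submodule.span_pair_eq_of_inner_eq_zero_of_finrank_eq_two {S : Submodule ℝ V}
    (hS : Module.finrank ℝ S = 2) {e f : V} (he : e ∈ S) (hf : f ∈ S)
    (he0 : e ≠ 0) (hf0 : f ≠ 0) (hef : ⟪e, f⟫ = 0) :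
    Submodule.span ℝ {e, f} = S := by
  have : FiniteDimensional ℝ S := .of_finrank_pos (by omega)
  have hli : LinearIndependent ℝ ![e, f] := by
    refine linearIndependent_of_ne_zero_of_inner_eq_zero (fun i ↦ by fin_cases i <;> simpa) ?_
    intro i j hij
    fin_cases i <;> fin_cases j <;> simp_all [real_inner_comm]
  refine Submodule.eq_of_le_of_finrank_eq (Submodule.span_le.mpr ?_) ?_
  · simp [Set.insert_subset_iff, he, hf]
  · rw [hS, ← Matrix.range_cons_cons_empty e f ![], finrank_span_eq_card hli, Fintype.card_fin]

theorem exists_eq_smul_of_inner_eq_zero_of_finrank_eq_two {S : Submodule ℝ V}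
    (hS : Module.finrank ℝ S = 2) {e f v : V} (he : e ∈ S) (hf : f ∈ S) (hv : v ∈ S)
    (he0 : e ≠ 0) (hf0 : f ≠ 0) (hef : ⟪e, f⟫ = 0) (hev : ⟪e, v⟫ = 0) :
    ∃ b : ℝ, v = b • f := by
  rw [← Submodule.span_pair_eq_of_inner_eq_zero_of_finrank_eq_two hS he hf he0 hf0 hef,
    Submodule.mem_span_pair] at hv
  obtain ⟨a, b, rfl⟩ := hv
  have hae : a * ⟪e, e⟫ = 0 := by simpa [inner_add_right, inner_smul_right, hef] using hev
  have ha : a = 0 := (mul_eq_zero.mp hae).resolve_right (inner_self_ne_zero.mpr he0)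
  exact ⟨b, by simp [ha]⟩

theorem exists_apply_eq_smul_of_isometry_of_sq_eq_neg {S : Submodule ℝ V}
    (hS : Module.finrank ℝ S = 2) {g : V →ₗ[ℝ] V →ₗ[ℝ] ℝ} (hg : ∀ v w, g v w = g w v)
    (hgS : ∀ v ∈ S, ∀ w ∈ S, g v w = ⟪v, w⟫)
    {J : V →ₗ[ℝ] V} (hJ2 : ∀ v, J (J v) = -v) (hJg : ∀ v w, g (J v) (J w) = g v w)
    (hJS : ∀ v ∈ S, J v ∈ S) {e f : V} (he : e ∈ S) (hf : f ∈ S)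
    (he0 : e ≠ 0) (hf0 : f ≠ 0) (hef : ⟪e, f⟫ = 0) :
    ∃ b : ℝ, J e = b • f := by
  refine exists_eq_smul_of_inner_eq_zero_of_finrank_eq_two hS he hf (hJS e he) he0 hf0 hef ?_
  rw [← hgS e he (J e) (hJS e he)]
  exact LinearMap.apply_self_apply_eq_zero_of_isometry_of_sq_eq_neg hg hJ2 hJg e

end Plane

theorem stmt_11_general (V : Type*) [NormedAddCommGroup V] [InnerProductSpace ℝ V]
    (P Q : Submodule ℝ V)
    (hPdim : Module.finrank ℝ P = 2) (hQdim : Module.finrank ℝ Q = 2)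
    (e₁ e₂ e₃ e₄ : V)
    (he₁P : e₁ ∈ P) (he₂P : e₂ ∈ P) (he₃Q : e₃ ∈ Q) (he₄Q : e₄ ∈ Q)
    (he₁ : ‖e₁‖ = 1) (he₂ : ‖e₂‖ = 1) (he₁₂ : ⟪e₁, e₂⟫ = 0)
    (he₃ : ‖e₃‖ = 1) (he₄ : ‖e₄‖ = 1) (he₃₄ : ⟪e₃, e₄⟫ = 0)
    (g' : V →ₗ[ℝ] V →ₗ[ℝ] ℝ)
    (hsymm : ∀ v w : V, g' v w = g' w v)
    (hgP : ∀ v ∈ P, ∀ w ∈ P, g' v w = ⟪v, w⟫)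
    (hgQ : ∀ v ∈ Q, ∀ w ∈ Q, g' v w = ⟪v, w⟫)
    (h13 : g' e₁ e₃ ≠ 0) (h24 : g' e₂ e₄ = 0) :
    ¬ ∃ J' : V →ₗ[ℝ] V, (∀ v : V, J' (J' v) = -v) ∧
      (∀ v w : V, g' (J' v) (J' w) = g' v w) ∧
      (∀ v ∈ P, J' v ∈ P) ∧ (∀ v ∈ Q, J' v ∈ Q) := by
  rintro ⟨J', hJ'2, hJ'g, hJ'P, hJ'Q⟩
  have ne_zero {v : V} (hv : ‖v‖ = 1) : v ≠ 0 := norm_ne_zero_iff.mp (by simp [hv])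
  obtain ⟨b, hb⟩ := exists_apply_eq_smul_of_isometry_of_sq_eq_neg hPdim hsymm hgP hJ'2 hJ'g hJ'P
    he₁P he₂P (ne_zero he₁) (ne_zero he₂) he₁₂
  obtain ⟨d, hd⟩ := exists_apply_eq_smul_of_isometry_of_sq_eq_neg hQdim hsymm hgQ hJ'2 hJ'g hJ'Q
    he₃Q he₄Q (ne_zero he₃) (ne_zero he₄) he₃₄
  apply h13
  calc g' e₁ e₃ = g' (J' e₁) (J' e₃) := (hJ'g e₁ e₃).symm
    _ = b * d * g' e₂ e₄ := by
      simp only [hb, hd, map_smul, LinearMap.smul_apply, smul_eq_mul]; ring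
    _ = 0 := by rw [h24, mul_zero]

/-- If a new inner product g' agrees with g on P and on Q = P⊥ but has
off-diagonal block g'(e₁,e₃) ≠ 0, g'(e₂,e₄) = g'(e₁,e₄) = g'(e₂,e₃) = 0
(where (e₁,e₂), (e₃,e₄) are g-orthonormal bases adapted to an orthogonal
complex structure J), then P and Q are not simultaneously complex for any
orthogonal complex structure with respect to g'. -/
theorem stmt_11 (V : Type*) [NormedAddCommGroup V] [InnerProductSpace ℝ V]
    [FiniteDimensional ℝ V] (hdim : Module.finrank ℝ V = 4)
    (P Q : Submodule ℝ V)
    (hPdim : Module.finrank ℝ P = 2) (hQdim : Module.finrank ℝ Q = 2)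
    (hPQ : IsCompl P Q) (hQperp : Q = Pᗮ)
    (J : V →ₗ[ℝ] V)
    (hJ2 : ∀ v : V, J (J v) = -v)
    (hJorth : ∀ v w : V, ⟪J v, J w⟫ = ⟪v, w⟫)
    (hJP : ∀ v ∈ P, J v ∈ P) (hJQ : ∀ v ∈ Q, J v ∈ Q)
    (e₁ e₂ e₃ e₄ : V)
    (he₁P : e₁ ∈ P) (he₂P : e₂ ∈ P) (he₃Q : e₃ ∈ Q) (he₄Q : e₄ ∈ Q)
    (he₁ : ‖e₁‖ = 1) (he₂ : ‖e₂‖ = 1) (he₁₂ : ⟪e₁, e₂⟫ = 0)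
    (he₃ : ‖e₃‖ = 1) (he₄ : ‖e₄‖ = 1) (he₃₄ : ⟪e₃, e₄⟫ = 0)
    (hJe₁ : J e₁ = e₂) (hJe₃ : J e₃ = e₄)
    (g' : V →ₗ[ℝ] V →ₗ[ℝ] ℝ)
    (hsymm : ∀ v w : V, g' v w = g' w v)
    (hpos : ∀ v : V, v ≠ 0 → 0 < g' v v)
    (hgP : ∀ v ∈ P, ∀ w ∈ P, g' v w = ⟪v, w⟫)
    (hgQ : ∀ v ∈ Q, ∀ w ∈ Q, g' v w = ⟪v, w⟫)
    (h13 : g' e₁ e₃ ≠ 0) (h24 : g' e₂ e₄ = 0)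
    (h14 : g' e₁ e₄ = 0) (h23 : g' e₂ e₃ = 0) :
    ¬ ∃ J' : V →ₗ[ℝ] V, (∀ v : V, J' (J' v) = -v) ∧
      (∀ v w : V, g' (J' v) (J' w) = g' v w) ∧
      (∀ v ∈ P, J' v ∈ P) ∧ (∀ v ∈ Q, J' v ∈ Q) :=
  stmt_11_general V P Q hPdim hQdim e₁ e₂ e₃ e₄ he₁P he₂P he₃Q he₄Q he₁ he₂ he₁₂ he₃ he₄ he₃₄ g'
    hsymm hgP hgQ h13 h24
end

section
/- Let P and Q be two transverse 2-dimensional subspaces of a 4-dimensional real inner product space V (P ∩ Q = {0}). P and Q are simultaneously complex for some orthogonal complex structure on V if and only if there exist orthonormal bases (e₁,e₂) of P and (f₁,f₂) of Q such that the Gram matrix (⟨eₐ, f_r⟩) satisfies ⟨e₁,f₁⟩ = ⟨e₂,f₂⟩ and ⟨e₁,f₂⟩ = -⟨e₂,f₁⟩. -/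
open RealInnerProductSpace

lemma aux_span {V : Type*} [NormedAddCommGroup V] [InnerProductSpace ℝ V]
    [FiniteDimensional ℝ V] (P : Submodule ℝ V) (hP : Module.finrank ℝ P = 2)
    (e₁ e₂ : V) (h1 : e₁ ∈ P) (h2 : e₂ ∈ P) (hn1 : ‖e₁‖ = 1) (hn2 : ‖e₂‖ = 1)
    (ho : ⟪e₁, e₂⟫ = 0) : Submodule.span ℝ {e₁, e₂} = P := by
  have horth : Orthonormal ℝ ![e₁, e₂] := by
    constructor
    · intro i; fin_cases i <;> simpa
    · intro i j hij
      fin_cases i <;> fin_cases j <;> simp_all [real_inner_comm e₂ e₁]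
  have hli := horth.linearIndependent
  have hr : Set.range ![e₁, e₂] = {e₁, e₂} := by
    simp [Matrix.range_cons, Matrix.range_empty, Set.pair_comm e₂ e₁]
  have hfin : Module.finrank ℝ (Submodule.span ℝ {e₁, e₂}) = 2 := by
    rw [← hr, finrank_span_eq_card hli]; simp
  apply Submodule.eq_of_le_of_finrank_le
  · rw [Submodule.span_le]; rintro x (rfl | rfl) <;> assumption
  · rw [hP, hfin]

lemma aux_unit {V : Type*} [NormedAddCommGroup V] [InnerProductSpace ℝ V]
    [FiniteDimensional ℝ V] (P : Submodule ℝ V) (hP : Module.finrank ℝ P = 2) :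
    ∃ e : V, e ∈ P ∧ ‖e‖ = 1 := by
  have hne : P ≠ ⊥ := by
    intro h; rw [h] at hP; simp at hP
  obtain ⟨x, hx, hx0⟩ := Submodule.exists_mem_ne_zero_of_ne_bot hne
  refine ⟨‖x‖⁻¹ • x, P.smul_mem _ hx, ?_⟩
  rw [norm_smul, norm_inv, norm_norm, inv_mul_cancel₀ (norm_ne_zero_iff.mpr hx0)]

/-- Two transverse 2-planes P, Q in a 4-dimensional real inner product space
are simultaneously complex for some orthogonal complex structure if and only if
there exist orthonormal bases (e₁,e₂) of P and (f₁,f₂) of Q with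
⟪e₁,f₁⟫ = ⟪e₂,f₂⟫ and ⟪e₁,f₂⟫ = -⟪e₂,f₁⟫. -/
theorem stmt_18 (V : Type*) [NormedAddCommGroup V] [InnerProductSpace ℝ V]
    [FiniteDimensional ℝ V] (hdim : Module.finrank ℝ V = 4)
    (P Q : Submodule ℝ V)
    (hPdim : Module.finrank ℝ P = 2) (hQdim : Module.finrank ℝ Q = 2)
    (hPQ : P ⊓ Q = ⊥) :
    (∃ J : V →ₗ[ℝ] V, (∀ v : V, J (J v) = -v) ∧
      (∀ v w : V, ⟪J v, J w⟫ = ⟪v, w⟫) ∧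
      (∀ v ∈ P, J v ∈ P) ∧ (∀ v ∈ Q, J v ∈ Q)) ↔
    (∃ e₁ e₂ f₁ f₂ : V,
      e₁ ∈ P ∧ e₂ ∈ P ∧ f₁ ∈ Q ∧ f₂ ∈ Q ∧
      ‖e₁‖ = 1 ∧ ‖e₂‖ = 1 ∧ ⟪e₁, e₂⟫ = 0 ∧ Submodule.span ℝ {e₁, e₂} = P ∧
      ‖f₁‖ = 1 ∧ ‖f₂‖ = 1 ∧ ⟪f₁, f₂⟫ = 0 ∧ Submodule.span ℝ {f₁, f₂} = Q ∧
      ⟪e₁, f₁⟫ = ⟪e₂, f₂⟫ ∧ ⟪e₁, f₂⟫ = -⟪e₂, f₁⟫) := by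
  constructor
  · rintro ⟨J, hJ2, hJi, hJP, hJQ⟩
    obtain ⟨e₁, he₁P, he₁n⟩ := aux_unit P hPdim
    obtain ⟨f₁, hf₁Q, hf₁n⟩ := aux_unit Q hQdim
    have norm_J : ∀ v : V, ‖J v‖ = ‖v‖ := by
      intro v
      have h : ‖J v‖ ^ 2 = ‖v‖ ^ 2 := by
        rw [← real_inner_self_eq_norm_sq, ← real_inner_self_eq_norm_sq, hJi]
      nlinarith [norm_nonneg (J v), norm_nonneg v]
    have orth_J : ∀ v : V, ⟪v, J v⟫ = 0 := by
      intro v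
      have h := hJi v (J v)
      rw [hJ2, inner_neg_right] at h
      rw [real_inner_comm v (J v)] at h
      linarith
    refine ⟨e₁, J e₁, f₁, J f₁, he₁P, hJP e₁ he₁P, hf₁Q, hJQ f₁ hf₁Q,
      he₁n, by rw [norm_J]; exact he₁n, orth_J e₁, ?_,
      hf₁n, by rw [norm_J]; exact hf₁n, orth_J f₁, ?_, (hJi e₁ f₁).symm, ?_⟩
    · exact aux_span P hPdim _ _ he₁P (hJP e₁ he₁P) he₁n (by rw [norm_J]; exact he₁n) (orth_J e₁)
    · exact aux_span Q hQdim _ _ hf₁Q (hJQ f₁ hf₁Q) hf₁n (by rw [norm_J]; exact hf₁n) (orth_J f₁)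
    · have h := hJi e₁ (J f₁)
      rw [hJ2, inner_neg_right] at h
      linarith
  · rintro ⟨e₁, e₂, f₁, f₂, he₁P, he₂P, hf₁Q, hf₂Q, hn1, hn2, ho, hsP,
      hm1, hm2, hof, hsQ, ha, hb⟩
    -- build a basis of V
    have hsup : P ⊔ Q = ⊤ := by
      apply Submodule.eq_top_of_finrank_eq
      have h := Submodule.finrank_sup_add_finrank_inf_eq P Q
      rw [hPQ, hPdim, hQdim] at h
      simp at h
      omega
    have hspan : ⊤ ≤ Submodule.span ℝ (Set.range ![e₁, e₂, f₁, f₂]) := by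
      rw [← hsup]
      have hr : Set.range ![e₁, e₂, f₁, f₂] = {e₁, e₂, f₁, f₂} := by
        ext x; simp [Fin.exists_fin_succ, Matrix.cons_val_zero, Matrix.cons_val_one]; tauto
      rw [hr]
      apply sup_le
      · rw [← hsP, Submodule.span_le]
        rintro x (rfl | rfl) <;> apply Submodule.subset_span <;> simp
      · rw [← hsQ, Submodule.span_le]
        rintro x (rfl | rfl) <;> apply Submodule.subset_span <;> simp
    have hcard : Fintype.card (Fin 4) = Module.finrank ℝ V := by simp [hdim]
    let B := basisOfTopLeSpanOfCardEqFinrank ![e₁, e₂, f₁, f₂] hspan hcard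
    have hB : ∀ i, B i = ![e₁, e₂, f₁, f₂] i := by
      intro i
      rw [show (B : Fin 4 → V) = ![e₁, e₂, f₁, f₂] from
        coe_basisOfTopLeSpanOfCardEqFinrank _ _ _]
    let J : V →ₗ[ℝ] V := B.constr ℝ ![e₂, -e₁, f₂, -f₁]
    have hJ0 : J e₁ = e₂ := by
      have := B.constr_basis ℝ ![e₂, -e₁, f₂, -f₁] 0
      rwa [hB 0] at this
    have hJ1 : J e₂ = -e₁ := by
      have := B.constr_basis ℝ ![e₂, -e₁, f₂, -f₁] 1
      rwa [hB 1] at this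
    have hJ2 : J f₁ = f₂ := by
      have := B.constr_basis ℝ ![e₂, -e₁, f₂, -f₁] 2
      rwa [hB 2] at this
    have hJ3 : J f₂ = -f₁ := by
      have := B.constr_basis ℝ ![e₂, -e₁, f₂, -f₁] 3
      rwa [hB 3] at this
    -- inner product facts
    have i11 : ⟪e₁, e₁⟫ = 1 := by rw [real_inner_self_eq_norm_sq, hn1]; norm_num
    have i22 : ⟪e₂, e₂⟫ = 1 := by rw [real_inner_self_eq_norm_sq, hn2]; norm_num
    have j11 : ⟪f₁, f₁⟫ = 1 := by rw [real_inner_self_eq_norm_sq, hm1]; norm_num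
    have j22 : ⟪f₂, f₂⟫ = 1 := by rw [real_inner_self_eq_norm_sq, hm2]; norm_num
    have ho' : ⟪e₂, e₁⟫ = 0 := by rw [real_inner_comm]; exact ho
    have hof' : ⟪f₂, f₁⟫ = 0 := by rw [real_inner_comm]; exact hof
    have ha' : ⟪f₁, e₁⟫ = ⟪f₂, e₂⟫ := by
      rw [real_inner_comm e₁ f₁, real_inner_comm e₂ f₂]; exact ha
    have hb' : ⟪f₂, e₁⟫ = -⟪f₁, e₂⟫ := by
      rw [real_inner_comm e₁ f₂, real_inner_comm e₂ f₁]; exact hb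
    refine ⟨J, ?_, ?_, ?_, ?_⟩
    · intro v
      have key : J ∘ₗ J = -LinearMap.id := by
        apply B.ext
        intro i
        fin_cases i <;>
          simp [hB, map_neg, hJ0, hJ1, hJ2, hJ3, neg_neg]
      have := LinearMap.congr_fun key v
      simpa using this
    · intro v w
      have key : (innerₗ V).compl₁₂ J J = innerₗ V := by
        apply B.ext; intro i
        apply B.ext; intro j
        fin_cases i <;> fin_cases j <;>
          simp [hB, hJ0, hJ1, hJ2, hJ3, inner_neg_left, inner_neg_right,
            i11, i22, j11, j22, ho, ho', hof, hof'] <;>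
          linarith [ha, hb, ha', hb']
      have := LinearMap.congr_fun₂ key v w
      simpa using this
    · intro v hv
      rw [← hsP] at hv ⊢
      induction hv using Submodule.span_induction with
      | mem x hx =>
        rcases hx with rfl | rfl
        · rw [hJ0]; exact Submodule.subset_span (by simp)
        · rw [hJ1]; exact Submodule.neg_mem _ (Submodule.subset_span (by simp))
      | zero => simp
      | add x y _ _ hx hy => rw [map_add]; exact Submodule.add_mem _ hx hy
      | smul c x _ hx => rw [map_smul]; exact Submodule.smul_mem _ c hx
    · intro v hv
      rw [← hsQ] at hv ⊢
      induction hv using Submodule.span_induction with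
      | mem x hx =>
        rcases hx with rfl | rfl
        · rw [hJ2]; exact Submodule.subset_span (by simp)
        · rw [hJ3]; exact Submodule.neg_mem _ (Submodule.subset_span (by simp))
      | zero => simp
      | add x y _ _ hx hy => rw [map_add]; exact Submodule.add_mem _ hx hy
      | smul c x _ hx => rw [map_smul]; exact Submodule.smul_mem _ c hx
end
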